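/- Let f and ψ be meromorphic functions in the unit disc 𝔻, with ψ continuous on ∂𝔻. Let zₙ ∈ 𝔻 with zₙ → z₀ ∈ ∂𝔻, let ρₙ > 0 with ρₙ → 0, and suppose gₙ(z) = f(zₙ + ρₙ·z) converges uniformly on each compact subset of ℂ (with respect to the spherical metric on the Riemann sphere ℂ ∪ {∞}) to a non-constant meromorphic function g on ℂ. If there exists N ∈ ℕ such that for all n > N and all z ∈ ℂ with zₙ + ρₙ·z ∈ 𝔻 one has f(zₙ + ρₙ·z) ≠ ψ(zₙ + ρₙ·z) (as values in the Riemann sphere), then g(z) ≠ ψ(z₀) for every z ∈ ℂ, where ψ(z₀) denotes the value at z₀ of the continuous extension of ψ to the closed unit disc. -/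

import Mathlib

open Complex Filter Topology Metric Set
open scoped OnePoint Classical

noncomputable section

/-- The Riemann-sphere-valued version of a meromorphic function: the usual value at
points of analyticity, and `∞` elsewhere (in particular at poles). -/
def sphv (f : ℂ → ℂ) (z : ℂ) : OnePoint ℂ :=
  if AnalyticAt ℂ f z then (f z : OnePoint ℂ) else ∞

/-- Chordal (spherical) distance on `Option ℂ`. -/
def sphDistAux : Option ℂ → Option ℂ → ℝ
  | Option.some a, Option.some b =>
      2 * ‖a - b‖ /
        (Real.sqrt (1 + ‖a‖ ^ 2) * Real.sqrt (1 + ‖b‖ ^ 2))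
  | Option.some a, Option.none => 2 / Real.sqrt (1 + ‖a‖ ^ 2)
  | Option.none, Option.some b => 2 / Real.sqrt (1 + ‖b‖ ^ 2)
  | Option.none, Option.none => 0

/-- Chordal (spherical) distance on the Riemann sphere `OnePoint ℂ`. -/
def sphDist (x y : OnePoint ℂ) : ℝ := sphDistAux x y

/-- The spherical derivative `f^#`: `|f'|/(1+|f|²)` at points of analyticity, and the
limiting value (equal to `(1/f)^#`) at poles. -/
def sphDerivAt (f : ℂ → ℂ) (z : ℂ) : ℝ :=
  if AnalyticAt ℂ f z then ‖deriv f z‖ / (1 + ‖f z‖ ^ 2)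
  else Filter.limsup (fun w => ‖deriv f w‖ / (1 + ‖f w‖ ^ 2)) (𝓝[≠] z)

/-- A genuinely meromorphic function on `s`: meromorphic, and at every point of `s` it is
either analytic or has a pole (tends to `∞`). -/
def MeromorphicNiceOn (f : ℂ → ℂ) (s : Set ℂ) : Prop :=
  MeromorphicOn f s ∧ ∀ z ∈ s, AnalyticAt ℂ f z ∨ Tendsto f (𝓝[≠] z) (cocompact ℂ)

/-- A meromorphic function on the unit disc is a normal function if `(1-|z|²) f^#(z)` is
bounded on the disc. -/
def IsNormalFunction (f : ℂ → ℂ) : Prop :=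
  ∃ C : ℝ, ∀ z ∈ ball (0 : ℂ) 1, (1 - ‖z‖ ^ 2) * sphDerivAt f z ≤ C

/-!
Suppose `sphv g z = c := Ψ z₀`. Read through a chart at `c` (the identity if `c` is finite,
inversion `w ↦ 1/w` if `c = ∞`, which is an isometry of the chordal metric), `g` becomes
holomorphic near `z` with an isolated `c`-point, the rescalings `f (zₙ + ρₙ w)` converge to it
uniformly on a small disc around `z`, and, by continuity of `Ψ` at `z₀`, the rescalings of `ψ`
converge uniformly to the constant `c`. By Hurwitz's theorem (here: the minimum modulus principle)
the difference of the two charted rescalings has a zero for every large `n`, i.e. `f = ψ` at some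
rescaled point, contradicting the hypothesis.
-/

def sphInv (x : OnePoint ℂ) : OnePoint ℂ :=
  x.elim ((0 : ℂ) : OnePoint ℂ) fun a => if a = 0 then ∞ else ((a⁻¹ : ℂ) : OnePoint ℂ)

@[simp] lemma sphInv_infty : sphInv ∞ = ((0 : ℂ) : OnePoint ℂ) := rfl

lemma sphInv_coe (a : ℂ) : sphInv a = if a = 0 then ∞ else ((a⁻¹ : ℂ) : OnePoint ℂ) := rfl

@[simp] lemma sphInv_zero : sphInv ((0 : ℂ) : OnePoint ℂ) = ∞ := by simp [sphInv_coe]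

lemma sphInv_coe_of_ne_zero {a : ℂ} (ha : a ≠ 0) : sphInv a = ((a⁻¹ : ℂ) : OnePoint ℂ) := by
  simp [sphInv_coe, ha]

@[simp] lemma sphInv_sphInv (x : OnePoint ℂ) : sphInv (sphInv x) = x := by
  induction x with
  | infty => simp
  | coe a =>
    rcases eq_or_ne a 0 with rfl | ha
    · simp
    · rw [sphInv_coe_of_ne_zero ha, sphInv_coe_of_ne_zero (inv_ne_zero ha), inv_inv]

lemma sphInv_injective : Function.Injective sphInv :=
  Function.LeftInverse.injective sphInv_sphInv

lemma sphDist_coe_coe (a b : ℂ) : sphDist a b =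
    2 * ‖a - b‖ / (Real.sqrt (1 + ‖a‖ ^ 2) * Real.sqrt (1 + ‖b‖ ^ 2)) := rfl

lemma sphDist_coe_infty (a : ℂ) : sphDist a ∞ = 2 / Real.sqrt (1 + ‖a‖ ^ 2) := rfl

lemma sphDist_infty_coe (b : ℂ) : sphDist ∞ b = 2 / Real.sqrt (1 + ‖b‖ ^ 2) := rfl

lemma sphDist_infty_infty : sphDist ∞ ∞ = 0 := rfl

lemma sqrt_one_add_norm_inv_sq {a : ℂ} (ha : a ≠ 0) :
    Real.sqrt (1 + ‖a⁻¹‖ ^ 2) = Real.sqrt (1 + ‖a‖ ^ 2) / ‖a‖ := by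
  have hA : 0 < ‖a‖ := norm_pos_iff.2 ha
  rw [norm_inv, ← Real.sqrt_sq hA.le, ← Real.sqrt_div' _ (by positivity), Real.sqrt_sq hA.le]
  congr 1
  field_simp
  ring

lemma sphDist_inv_inv {a b : ℂ} (ha : a ≠ 0) (hb : b ≠ 0) :
    sphDist ((a⁻¹ : ℂ) : OnePoint ℂ) ((b⁻¹ : ℂ) : OnePoint ℂ) = sphDist a b := by
  have hA : 0 < ‖a‖ := norm_pos_iff.2 ha
  have hB : 0 < ‖b‖ := norm_pos_iff.2 hb
  have hsub : ‖a⁻¹ - b⁻¹‖ = ‖a - b‖ / (‖a‖ * ‖b‖) := by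
    rw [inv_sub_inv ha hb, norm_div, norm_mul, norm_sub_rev]
  rw [sphDist_coe_coe, sphDist_coe_coe, sqrt_one_add_norm_inv_sq ha,
    sqrt_one_add_norm_inv_sq hb, hsub]
  field_simp

lemma sphDist_inv_infty {a : ℂ} (ha : a ≠ 0) :
    sphDist ((a⁻¹ : ℂ) : OnePoint ℂ) ((0 : ℂ) : OnePoint ℂ) = sphDist a ∞ := by
  have hA : 0 < ‖a‖ := norm_pos_iff.2 ha
  rw [sphDist_coe_coe, sphDist_coe_infty, sqrt_one_add_norm_inv_sq ha, sub_zero, norm_inv]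
  field_simp
  simp

lemma sphDist_zero_inv {a : ℂ} (ha : a ≠ 0) :
    sphDist ((0 : ℂ) : OnePoint ℂ) ((a⁻¹ : ℂ) : OnePoint ℂ) = sphDist ∞ a := by
  have hA : 0 < ‖a‖ := norm_pos_iff.2 ha
  rw [sphDist_coe_coe, sphDist_infty_coe, sqrt_one_add_norm_inv_sq ha, zero_sub, norm_neg,
    norm_inv]
  field_simp
  simp

lemma sphDist_comm (x y : OnePoint ℂ) : sphDist x y = sphDist y x := by
  induction x <;> induction y <;>
    simp only [sphDist_coe_coe, sphDist_coe_infty, sphDist_infty_coe, norm_sub_rev, mul_comm]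

lemma sphDist_self (x : OnePoint ℂ) : sphDist x x = 0 := by
  induction x <;> simp [sphDist_coe_coe, sphDist_infty_infty]

lemma OnePoint.eq_infty_or_eq_zero_or_eq_coe (x : OnePoint ℂ) :
    x = ∞ ∨ x = ((0 : ℂ) : OnePoint ℂ) ∨ ∃ a : ℂ, a ≠ 0 ∧ x = a := by
  induction x with
  | infty => exact .inl rfl
  | coe a => rcases eq_or_ne a 0 with rfl | ha <;> simp [*]

lemma sphDist_sphInv (x y : OnePoint ℂ) : sphDist (sphInv x) (sphInv y) = sphDist x y := by
  rcases x.eq_infty_or_eq_zero_or_eq_coe with rfl | rfl | ⟨a, ha, rfl⟩ <;>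
  rcases y.eq_infty_or_eq_zero_or_eq_coe with rfl | rfl | ⟨b, hb, rfl⟩ <;>
  simp only [sphInv_infty, sphInv_zero, sphInv_coe_of_ne_zero, sphDist_self, sphDist_inv_inv,
    sphDist_inv_infty, sphDist_zero_inv, ne_eq, not_false_eq_true, *]
  all_goals first
    | exact sphDist_comm _ _
    | rw [sphDist_comm, ← sphDist_zero_inv (inv_ne_zero ‹_›), inv_inv, sphDist_comm]
    | rw [sphDist_comm, ← sphDist_inv_infty (inv_ne_zero ‹_›), inv_inv, sphDist_comm]

lemma tendsto_sphInv_infty : Tendsto sphInv (𝓝 ∞) (𝓝 ((0 : ℂ) : OnePoint ℂ)) := by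
  rw [OnePoint.nhds_infty_eq, tendsto_sup, tendsto_map'_iff]
  refine ⟨?_, by simpa using tendsto_pure_nhds sphInv ∞⟩
  have hinv : Tendsto (fun a : ℂ => ((a⁻¹ : ℂ) : OnePoint ℂ)) (coclosedCompact ℂ) (𝓝 ↑(0 : ℂ)) := by
    refine (OnePoint.continuous_coe.tendsto 0).comp ?_
    rw [coclosedCompact_eq_cocompact, ← cobounded_eq_cocompact]
    exact tendsto_inv₀_cobounded
  refine hinv.congr' ?_
  filter_upwards [(isCompact_singleton (x := (0 : ℂ))).compl_mem_coclosedCompact_of_isClosed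
    isClosed_singleton] with a ha
  exact (sphInv_coe_of_ne_zero ha).symm

lemma exists_eq_coe_norm_sub_lt_of_sphDist_lt {M ε : ℝ} (hM : 0 ≤ M) (hε : 0 < ε) :
    ∃ η > 0, ∀ (x : OnePoint ℂ) (b : ℂ), ‖b‖ ≤ M → sphDist x b < η →
      ∃ u : ℂ, x = u ∧ ‖u - b‖ < ε := by
  refine ⟨min (1 / (1 + M)) (ε / (1 + M) ^ 2), by positivity, fun x b hb hd => ?_⟩
  have hd₁ := hd.trans_le (min_le_left _ _)
  have hd₂ := hd.trans_le (min_le_right _ _)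
  have hsb : Real.sqrt (1 + ‖b‖ ^ 2) ≤ 1 + M := (sqrt_one_add_norm_sq_le b).trans (by linarith)
  have hsb₀ : 0 < Real.sqrt (1 + ‖b‖ ^ 2) := by positivity
  induction x with
  | infty =>
    rw [sphDist_infty_coe] at hd₁
    have : 2 / (1 + M) ≤ 2 / Real.sqrt (1 + ‖b‖ ^ 2) := by gcongr
    have : 1 / (1 + M) < 2 / (1 + M) := by gcongr; norm_num
    linarith
  | coe u =>
    refine ⟨u, rfl, ?_⟩
    set d := sphDist u b with hd_def
    have hd₀ : 0 ≤ d := by rw [hd_def, sphDist_coe_coe]; positivity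
    have hsu : Real.sqrt (1 + ‖u‖ ^ 2) ≤ 1 + M + ‖u - b‖ :=
      (sqrt_one_add_norm_sq_le u).trans (by linarith [norm_le_norm_add_norm_sub' u b])
    have hsu₀ : 0 < Real.sqrt (1 + ‖u‖ ^ 2) := by positivity
    have ht : 2 * ‖u - b‖ = d * (Real.sqrt (1 + ‖u‖ ^ 2) * Real.sqrt (1 + ‖b‖ ^ 2)) := by
      rw [hd_def, sphDist_coe_coe]; field_simp
    have hdM : d * (1 + M) < 1 := by rwa [lt_div_iff₀ (by positivity)] at hd₁
    have hdM' : d * (1 + M) ^ 2 < ε := by rwa [lt_div_iff₀ (by positivity)] at hd₂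
    have : 2 * ‖u - b‖ ≤ d * (1 + M) * (1 + M + ‖u - b‖) := by
      rw [ht]
      calc _ ≤ d * ((1 + M + ‖u - b‖) * (1 + M)) := by gcongr
        _ = _ := by ring
    nlinarith [norm_nonneg (u - b)]

lemma exists_eq_zero_of_norm_lt_norm_on_sphere {F : ℂ → ℂ} {z : ℂ} {r : ℝ} (hr : 0 < r)
    (hF : DiffContOnCl ℂ F (ball z r)) (h : ∀ w ∈ sphere z r, ‖F z‖ < ‖F w‖) :
    ∃ w ∈ ball z r, F w = 0 := by
  by_contra! hne
  have hcl : closure (ball z r) = closedBall z r := closure_ball z hr.ne'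
  have hne' : ∀ w ∈ closure (ball z r), F w ≠ 0 := by
    rw [hcl, ← ball_union_sphere]
    rintro w (hw | hw) hFw
    · exact hne w hw hFw
    · simpa [hFw] using (norm_nonneg (F z)).trans_lt (h w hw)
  -- maximum modulus for `1 / F`
  obtain ⟨w, hw, hmax⟩ := Complex.exists_mem_frontier_isMaxOn_norm isBounded_ball
    (nonempty_ball.2 hr) (hF.inv hne')
  rw [frontier_ball z hr.ne'] at hw
  have hz := hmax (subset_closure (mem_ball_self hr))
  simp only [mem_ofPred_eq, Function.comp_apply, Pi.inv_apply, norm_inv] at hz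
  have := h w hw
  rw [inv_le_inv₀ (norm_pos_iff.2 (hne z (mem_ball_self hr)))
    (norm_pos_iff.2 (hne' w (by rw [hcl]; exact sphere_subset_closedBall hw)))] at hz
  linarith

lemma exists_eq_zero_of_norm_sub_lt {φ : ℂ → ℂ} {z : ℂ} {r : ℝ} (hr : 0 < r)
    (hφ : ContinuousOn φ (sphere z r)) (hφz : φ z = 0) (hne : ∀ w ∈ sphere z r, φ w ≠ 0) :
    ∃ δ > 0, ∀ F : ℂ → ℂ, DiffContOnCl ℂ F (ball z r) →
      (∀ w ∈ closedBall z r, ‖F w - φ w‖ < δ) → ∃ w ∈ ball z r, F w = 0 := by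
  obtain ⟨w₀, hw₀, hmin⟩ := (isCompact_sphere z r).exists_isMinOn
    (NormedSpace.sphere_nonempty.2 hr.le) hφ.norm
  refine ⟨‖φ w₀‖ / 2, by simpa using hne w₀ hw₀, fun F hF hclose => ?_⟩
  refine exists_eq_zero_of_norm_lt_norm_on_sphere hr hF fun w hw => ?_
  have hz := hclose z (mem_closedBall_self hr.le)
  have hw' := hclose w (sphere_subset_closedBall hw)
  rw [hφz, sub_zero] at hz
  have : ‖φ w₀‖ ≤ ‖φ w‖ := hmin hw
  have : ‖φ w‖ ≤ ‖F w‖ + ‖F w - φ w‖ := norm_le_insert _ _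
  linarith

lemma sphv_eq_coe_iff {f : ℂ → ℂ} {z b : ℂ} :
    sphv f z = b ↔ AnalyticAt ℂ f z ∧ f z = b := by
  unfold sphv
  split_ifs with h <;> simp [h]

lemma sphv_eq_infty_iff {f : ℂ → ℂ} {z : ℂ} : sphv f z = ∞ ↔ ¬ AnalyticAt ℂ f z := by
  unfold sphv
  split_ifs with h <;> simp [h]

def IsAnalyticLiftOn (F : ℂ → ℂ) (S : ℂ → OnePoint ℂ) (U : Set ℂ) : Prop :=
  ∀ x ∈ U, ∀ u : ℂ, S x = u → AnalyticAt ℂ F x ∧ F x = u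

lemma isAnalyticLiftOn_sphv (f : ℂ → ℂ) (U : Set ℂ) : IsAnalyticLiftOn f (sphv f) U :=
  fun _ _ _ => sphv_eq_coe_iff.1

def invAtPoles (f : ℂ → ℂ) (x : ℂ) : ℂ := if AnalyticAt ℂ f x then (f x)⁻¹ else 0

lemma analyticAt_invAtPoles_of_ne_zero {f : ℂ → ℂ} {x : ℂ} (hf : AnalyticAt ℂ f x)
    (hx : f x ≠ 0) : AnalyticAt ℂ (invAtPoles f) x :=
  (hf.inv hx).congr <| hf.eventually_analyticAt.mono fun _ hy => (if_pos hy).symm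

lemma MeromorphicAt.eventually_analyticAt_ne_zero_of_tendsto_cocompact {f : ℂ → ℂ} {x : ℂ}
    (hm : MeromorphicAt f x) (hp : Tendsto f (𝓝[≠] x) (cocompact ℂ)) :
    ∀ᶠ y in 𝓝[≠] x, AnalyticAt ℂ f y ∧ f y ≠ 0 :=
  hm.eventually_analyticAt.and (hp.eventually (isCompact_singleton (x := 0)).compl_mem_cocompact)

lemma analyticAt_invAtPoles_of_tendsto_cocompact {f : ℂ → ℂ} {x : ℂ} (hm : MeromorphicAt f x)
    (hp : Tendsto f (𝓝[≠] x) (cocompact ℂ)) (hx : ¬ AnalyticAt ℂ f x) :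
    AnalyticAt ℂ (invAtPoles f) x := by
  have hev := hm.eventually_analyticAt_ne_zero_of_tendsto_cocompact hp
  refine Complex.analyticAt_of_differentiable_on_punctured_nhds_of_continuousAt
    (hev.mono fun y hy => (analyticAt_invAtPoles_of_ne_zero hy.1 hy.2).differentiableAt) ?_
  rw [continuousAt_iff_punctured_nhds, invAtPoles, if_neg hx]
  refine ((tendsto_inv₀_cobounded.comp (cobounded_eq_cocompact (α := ℂ) ▸ hp))).congr' ?_
  filter_upwards [hev] with y hy
  simp [invAtPoles, hy.1]

lemma MeromorphicNiceOn.isAnalyticLiftOn_invAtPoles {f : ℂ → ℂ} {U : Set ℂ}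
    (hf : MeromorphicNiceOn f U) : IsAnalyticLiftOn (invAtPoles f) (sphInv ∘ sphv f) U := by
  intro x hx u hu
  by_cases hfx : AnalyticAt ℂ f x
  · rw [Function.comp_apply, (sphv_eq_coe_iff.2 ⟨hfx, rfl⟩)] at hu
    by_cases h0 : f x = 0
    · simp [h0] at hu
    · rw [sphInv_coe_of_ne_zero h0, OnePoint.coe_eq_coe] at hu
      exact ⟨analyticAt_invAtPoles_of_ne_zero hfx h0, by simp [invAtPoles, hfx, hu]⟩
  · rw [Function.comp_apply, sphv_eq_infty_iff.2 hfx, sphInv_infty, OnePoint.coe_eq_coe] at hu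
    exact ⟨analyticAt_invAtPoles_of_tendsto_cocompact (hf.1 x hx) ((hf.2 x hx).resolve_left hfx)
      hfx, by simp [invAtPoles, hfx, ← hu]⟩

lemma sphv_eq_of_eventually_eq {g : ℂ → ℂ} {y a : ℂ}
    (hy : AnalyticAt ℂ g y ∨ Tendsto g (𝓝[≠] y) (cocompact ℂ)) (h : ∀ᶠ w in 𝓝[≠] y, g w = a) :
    sphv g y = a := by
  rcases hy with hy | hp
  · exact sphv_eq_coe_iff.2 ⟨hy, tendsto_nhds_unique
      (hy.continuousAt.tendsto.mono_left nhdsWithin_le_nhds) (tendsto_const_nhds.congr' <| h.mono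
        fun _ hw => hw.symm)⟩
  · obtain ⟨w, hw, hw'⟩ := ((hp.eventually (isCompact_singleton (x := a)).compl_mem_cocompact).and
      h).exists
    exact absurd hw' hw

lemma MeromorphicNiceOn.eventually_ne_of_not_const {g : ℂ → ℂ} (hg : MeromorphicNiceOn g univ)
    (hgnc : ¬ ∀ z w : ℂ, sphv g z = sphv g w) (z : ℂ) :
    ∀ᶠ w in 𝓝[≠] z, g w ≠ g z := by
  have hm : MeromorphicOn (g · - g z) univ := hg.1.fun_sub (MeromorphicOn.const _)
  have htop : meromorphicOrderAt (g · - g z) z ≠ ⊤ := by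
    intro htop
    have hconst (y : ℂ) : sphv g y = g z := by
      have hy : meromorphicOrderAt (g · - g z) y = ⊤ := by
        by_contra hy
        exact hm.meromorphicOrderAt_ne_top_of_isPreconnected isPreconnected_univ trivial trivial hy
          htop
      refine sphv_eq_of_eventually_eq (hg.2 y trivial) ?_
      simpa [meromorphicOrderAt_eq_top_iff, sub_eq_zero] using hy
    exact hgnc fun y w => by rw [hconst, hconst]
  simpa [sub_eq_zero] using (meromorphicOrderAt_ne_top_iff_eventually_ne_zero (hm z trivial)).1 htop

lemma eventually_forall_add_mul_mem {ι : Type*} {l : Filter ι} {zn : ι → ℂ} {ρn : ι → ℝ} {z₀ : ℂ}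
    (hlim : Tendsto zn l (𝓝 z₀)) (hρ0 : Tendsto ρn l (𝓝 0)) {V : Set ℂ} (hV : V ∈ 𝓝 z₀)
    (K : Set ℂ) (hK : Bornology.IsBounded K) :
    ∀ᶠ i in l, ∀ w ∈ K, zn i + (ρn i : ℂ) * w ∈ V := by
  obtain ⟨R, hR⟩ := hK.subset_closedBall 0
  obtain ⟨θ, hθ, hθV⟩ := Metric.mem_nhds_iff.1 hV
  have hsmall : Tendsto (fun i => dist (zn i) z₀ + |ρn i| * R) l (𝓝 0) := by
    simpa using (hlim.dist (tendsto_const_nhds (x := z₀))).add (hρ0.abs.mul_const R)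
  filter_upwards [hsmall.eventually (gt_mem_nhds hθ)] with i hi w hw
  have hw : ‖w‖ ≤ R := by simpa using hR hw
  refine hθV (mem_ball.2 (lt_of_le_of_lt ?_ hi))
  calc dist (zn i + (ρn i : ℂ) * w) z₀ = ‖(zn i - z₀) + (ρn i : ℂ) * w‖ := by
        rw [dist_eq_norm]; ring_nf
    _ ≤ dist (zn i) z₀ + |ρn i| * ‖w‖ := by
        rw [dist_eq_norm, ← Real.norm_eq_abs, ← Complex.norm_real, ← norm_mul]
        exact norm_add_le _ _
    _ ≤ dist (zn i) z₀ + |ρn i| * R := by gcongr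

lemma IsAnalyticLiftOn.eventually_norm_sub_lt_of_sphDist {ι : Type*} {l : Filter ι}
    {F G : ℂ → ℂ} {S : ℂ → OnePoint ℂ} {U K : Set ℂ} (hF : IsAnalyticLiftOn F S U)
    (hK : IsCompact K) (hG : ContinuousOn G K) {x : ι → ℂ → ℂ}
    (hx : ∀ ε > 0, ∀ᶠ i in l, ∀ w ∈ K, x i w ∈ U ∧ sphDist (S (x i w)) (G w) < ε)
    {ε : ℝ} (hε : 0 < ε) :
    ∀ᶠ i in l, ∀ w ∈ K, x i w ∈ U ∧ AnalyticAt ℂ F (x i w) ∧ S (x i w) = F (x i w) ∧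
      ‖F (x i w) - G w‖ < ε := by
  obtain ⟨M, hM⟩ := hK.exists_bound_of_continuousOn hG
  obtain ⟨η, hη, hclose⟩ := exists_eq_coe_norm_sub_lt_of_sphDist_lt (le_max_right M 0) hε
  filter_upwards [hx η hη] with i hi w hw
  obtain ⟨hU, hd⟩ := hi w hw
  obtain ⟨u, hu, hlt⟩ := hclose _ _ ((hM w hw).trans (le_max_left _ _)) hd
  obtain ⟨han, rfl⟩ := hF _ hU u hu
  exact ⟨hU, han, hu, hlt⟩

lemma IsAnalyticLiftOn.eventually_norm_sub_lt_of_tendsto {ι : Type*} {l : Filter ι}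
    {P : ℂ → ℂ} {S : ℂ → OnePoint ℂ} {U K : Set ℂ} (hP : IsAnalyticLiftOn P S U) {z₀ a : ℂ}
    (hS : Tendsto S (𝓝[U] z₀) (𝓝 (a : OnePoint ℂ))) {x : ι → ℂ → ℂ}
    (hx : ∀ V ∈ 𝓝 z₀, ∀ᶠ i in l, ∀ w ∈ K, x i w ∈ V) {ε : ℝ} (hε : 0 < ε) :
    ∀ᶠ i in l, ∀ w ∈ K, x i w ∈ U →
      AnalyticAt ℂ P (x i w) ∧ S (x i w) = P (x i w) ∧ ‖P (x i w) - a‖ < ε := by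
  have hmem : S ⁻¹' ((↑) '' ball a ε) ∈ 𝓝[U] z₀ :=
    hS (by rw [OnePoint.nhds_coe_eq]; exact image_mem_map (ball_mem_nhds a hε))
  obtain ⟨V, hV, hVU⟩ := mem_nhdsWithin_iff_exists_mem_nhds_inter.1 hmem
  filter_upwards [hx V hV] with i hi w hw hU
  obtain ⟨u, hu, hSu⟩ := hVU ⟨hi w hw, hU⟩
  obtain ⟨han, hPu⟩ := hP _ hU u hSu.symm
  exact ⟨han, by rw [← hSu, hPu], by rwa [hPu, ← dist_eq_norm]⟩

lemma IsAnalyticLiftOn.eventually_analyticAt_eq_and_ne {G : ℂ → ℂ} {S : ℂ → OnePoint ℂ}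
    {z a : ℂ} (hG : IsAnalyticLiftOn G S univ) (hz : S z = a)
    (hiso : ∀ᶠ w in 𝓝[≠] z, ∃ b : ℂ, S w = b ∧ b ≠ a) :
    ∀ᶠ w in 𝓝 z, AnalyticAt ℂ G w ∧ S w = G w ∧ (w ≠ z → G w ≠ a) := by
  obtain ⟨hGz, hGza⟩ := hG z trivial a hz
  rw [← nhdsNE_sup_pure z, eventually_sup, eventually_pure]
  refine ⟨hiso.mono fun w ⟨b, hb, hba⟩ => ?_, ⟨hGz, by rw [hz, hGza], fun h => absurd rfl h⟩⟩
  obtain ⟨han, rfl⟩ := hG w trivial b hb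
  exact ⟨han, hb, fun _ => hba⟩

theorem eventually_exists_eq_of_tendsto_rescaled {ι : Type*} {l : Filter ι}
    {Sf Sψ Sg : ℂ → OnePoint ℂ} {F P G : ℂ → ℂ} {U : Set ℂ} {z₀ z a : ℂ}
    (hF : IsAnalyticLiftOn F Sf U) (hP : IsAnalyticLiftOn P Sψ U) (hG : IsAnalyticLiftOn G Sg univ)
    (hψ : Tendsto Sψ (𝓝[U] z₀) (𝓝 (a : OnePoint ℂ))) (hgz : Sg z = a)
    (hiso : ∀ᶠ w in 𝓝[≠] z, ∃ b : ℂ, Sg w = b ∧ b ≠ a) {x : ι → ℂ → ℂ}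
    (hxd : ∀ i, Differentiable ℂ (x i))
    (hx : ∀ V ∈ 𝓝 z₀, ∀ K : Set ℂ, Bornology.IsBounded K → ∀ᶠ i in l, ∀ w ∈ K, x i w ∈ V)
    (hconv : ∀ K : Set ℂ, IsCompact K → ∀ ε > 0, ∀ᶠ i in l, ∀ w ∈ K,
      x i w ∈ U ∧ sphDist (Sf (x i w)) (Sg w) < ε) :
    ∀ᶠ i in l, ∃ w, x i w ∈ U ∧ Sf (x i w) = Sψ (x i w) := by
  obtain ⟨r, hr, hball⟩ :=
    nhds_basis_closedBall.eventually_iff.1 (hG.eventually_analyticAt_eq_and_ne hgz hiso)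
  have hGza : G z = a :=
    OnePoint.coe_injective ((hball (mem_closedBall_self hr.le)).2.1.symm.trans hgz)
  have hGc : ContinuousOn G (closedBall z r) :=
    fun w hw => (hball hw).1.continuousAt.continuousWithinAt
  obtain ⟨δ, hδ, hhur⟩ := exists_eq_zero_of_norm_sub_lt hr (φ := fun w => G w - a)
    ((hGc.mono sphere_subset_closedBall).sub continuousOn_const)
    (sub_eq_zero.2 hGza)
    fun w hw => sub_ne_zero.2
      ((hball (sphere_subset_closedBall hw)).2.2 (ne_of_mem_sphere hw hr.ne'))
  have hGconv (ε : ℝ) (hε : 0 < ε) : ∀ᶠ i in l, ∀ w ∈ closedBall z r,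
      x i w ∈ U ∧ sphDist (Sf (x i w)) (G w) < ε :=
    (hconv _ (isCompact_closedBall z r) ε hε).mono fun i hi w hw => by
      rw [← (hball hw).2.1]; exact hi w hw
  filter_upwards [hF.eventually_norm_sub_lt_of_sphDist (isCompact_closedBall z r) hGc hGconv
    (half_pos hδ), hP.eventually_norm_sub_lt_of_tendsto hψ (hx · · _ isBounded_closedBall)
    (half_pos hδ)] with i hFi hPi
  have hdiff : DiffContOnCl ℂ (fun w => F (x i w) - P (x i w)) (ball z r) := by
    refine DifferentiableOn.diffContOnCl fun w hw => ?_
    rw [closure_ball z hr.ne'] at hw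
    obtain ⟨hU, hFan, -⟩ := hFi w hw
    exact ((hFan.differentiableAt.comp w (hxd i w)).sub
      ((hPi w hw hU).1.differentiableAt.comp w (hxd i w))).differentiableWithinAt
  obtain ⟨w, hw, hzero⟩ := hhur _ hdiff fun w hw => by
    obtain ⟨hU, -, -, hFw⟩ := hFi w hw
    obtain ⟨-, -, hPw⟩ := hPi w hw hU
    calc ‖F (x i w) - P (x i w) - (G w - a)‖ = ‖(F (x i w) - G w) - (P (x i w) - a)‖ := by ring_nf
      _ ≤ ‖F (x i w) - G w‖ + ‖P (x i w) - a‖ := norm_sub_le _ _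
      _ < δ := by linarith
  obtain ⟨hU, -, hSf, -⟩ := hFi w (ball_subset_closedBall hw)
  obtain ⟨-, hSψ, -⟩ := hPi w (ball_subset_closedBall hw) hU
  exact ⟨w, hU, by rw [hSf, hSψ, sub_eq_zero.1 hzero]⟩

theorem limit_omits_boundary_value_general
    (f ψ : ℂ → ℂ) (Ψ : ℂ → OnePoint ℂ)
    (hf : MeromorphicNiceOn f (ball (0 : ℂ) 1))
    (hψ : MeromorphicNiceOn ψ (ball (0 : ℂ) 1))
    (hΨc : ContinuousOn Ψ (closedBall (0 : ℂ) 1))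
    (hΨeq : ∀ z ∈ ball (0 : ℂ) 1, Ψ z = sphv ψ z)
    (zn : ℕ → ℂ) (z₀ : ℂ)
    (hz₀ : z₀ ∈ sphere (0 : ℂ) 1)
    (hlim : Tendsto zn atTop (𝓝 z₀))
    (ρn : ℕ → ℝ) (hρ0 : Tendsto ρn atTop (𝓝 0))
    (g : ℂ → ℂ) (hg : MeromorphicNiceOn g Set.univ)
    (hgnc : ¬ ∀ z w : ℂ, sphv g z = sphv g w)
    (hconv : ∀ K : Set ℂ, IsCompact K → ∀ ε > 0, ∀ᶠ n in atTop, ∀ z ∈ K,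
      zn n + (ρn n : ℂ) * z ∈ ball (0 : ℂ) 1 ∧
      sphDist (sphv f (zn n + (ρn n : ℂ) * z)) (sphv g z) < ε)
    (havoid : ∃ N : ℕ, ∀ n > N, ∀ z : ℂ, zn n + (ρn n : ℂ) * z ∈ ball (0 : ℂ) 1 →
      sphv f (zn n + (ρn n : ℂ) * z) ≠ sphv ψ (zn n + (ρn n : ℂ) * z)) :
    ∀ z : ℂ, sphv g z ≠ Ψ z₀ := by
  intro z hz
  obtain ⟨N, hN⟩ := havoid
  suffices ∀ᶠ n in atTop, ∃ w, zn n + (ρn n : ℂ) * w ∈ ball (0 : ℂ) 1 ∧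
      sphv f (zn n + (ρn n : ℂ) * w) = sphv ψ (zn n + (ρn n : ℂ) * w) by
    obtain ⟨n, ⟨w, hw, heq⟩, hn⟩ := (this.and (eventually_gt_atTop N)).exists
    exact hN n hn w hw heq
  have hΨ : Tendsto (sphv ψ) (𝓝[ball 0 1] z₀) (𝓝 (Ψ z₀)) :=
    ((hΨc z₀ (sphere_subset_closedBall hz₀)).mono ball_subset_closedBall).tendsto.congr'
      (eventually_nhdsWithin_of_forall hΨeq)
  have hx (V : Set ℂ) (hV : V ∈ 𝓝 z₀) := eventually_forall_add_mul_mem hlim hρ0 hV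
  have hxd (n : ℕ) : Differentiable ℂ fun w => zn n + (ρn n : ℂ) * w := by fun_prop
  cases hc : Ψ z₀ with
  | coe a =>
    rw [hc] at hz hΨ
    obtain ⟨hgz, rfl⟩ := sphv_eq_coe_iff.1 hz
    refine eventually_exists_eq_of_tendsto_rescaled (isAnalyticLiftOn_sphv f _)
      (isAnalyticLiftOn_sphv ψ _) (isAnalyticLiftOn_sphv g univ) hΨ hz ?_ hxd hx hconv
    filter_upwards [hgz.eventually_analyticAt.filter_mono nhdsWithin_le_nhds,
      hg.eventually_ne_of_not_const hgnc z] with w hw hne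
    exact ⟨g w, sphv_eq_coe_iff.2 ⟨hw, rfl⟩, hne⟩
  | infty =>
    rw [hc] at hz hΨ
    have hpole := (hg.2 z trivial).resolve_left (sphv_eq_infty_iff.1 hz)
    refine (eventually_exists_eq_of_tendsto_rescaled hf.isAnalyticLiftOn_invAtPoles
      hψ.isAnalyticLiftOn_invAtPoles hg.isAnalyticLiftOn_invAtPoles
      (tendsto_sphInv_infty.comp hΨ) (z := z) (by simp [hz]) ?_ hxd hx
      (by simpa only [Function.comp_apply, sphDist_sphInv] using hconv)).mono
      fun n ⟨w, hw, heq⟩ => ⟨w, hw, sphInv_injective heq⟩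
    filter_upwards [(hg.1 z trivial).eventually_analyticAt_ne_zero_of_tendsto_cocompact hpole]
      with w hw
    exact ⟨(g w)⁻¹, by simp [sphv_eq_coe_iff.2 ⟨hw.1, rfl⟩, sphInv_coe_of_ne_zero hw.2],
      inv_ne_zero hw.2⟩

/-- **Hurwitz step.** If the rescaled functions `f(zₙ + ρₙ z)` converge uniformly on
compacta (spherical metric) to a non-constant meromorphic `g` on `ℂ`, with `zₙ → z₀ ∈ ∂𝔻`
and `ρₙ → 0`, and if eventually `f ≠ ψ` along the rescaled points, then the limit `g`
omits the boundary value `Ψ z₀` of the continuous extension of `ψ`. -/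
theorem limit_omits_boundary_value
    (f ψ : ℂ → ℂ) (Ψ : ℂ → OnePoint ℂ)
    (hf : MeromorphicNiceOn f (ball (0 : ℂ) 1))
    (hψ : MeromorphicNiceOn ψ (ball (0 : ℂ) 1))
    (hΨc : ContinuousOn Ψ (closedBall (0 : ℂ) 1))
    (hΨeq : ∀ z ∈ ball (0 : ℂ) 1, Ψ z = sphv ψ z)
    (zn : ℕ → ℂ) (z₀ : ℂ)
    (hzn : ∀ n, zn n ∈ ball (0 : ℂ) 1)
    (hz₀ : z₀ ∈ sphere (0 : ℂ) 1)
    (hlim : Tendsto zn atTop (𝓝 z₀))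
    (ρn : ℕ → ℝ) (hρ : ∀ n, 0 < ρn n) (hρ0 : Tendsto ρn atTop (𝓝 0))
    (g : ℂ → ℂ) (hg : MeromorphicNiceOn g Set.univ)
    (hgnc : ¬ ∀ z w : ℂ, sphv g z = sphv g w)
    (hconv : ∀ K : Set ℂ, IsCompact K → ∀ ε > 0, ∀ᶠ n in atTop, ∀ z ∈ K,
      zn n + (ρn n : ℂ) * z ∈ ball (0 : ℂ) 1 ∧
      sphDist (sphv f (zn n + (ρn n : ℂ) * z)) (sphv g z) < ε)
    (havoid : ∃ N : ℕ, ∀ n > N, ∀ z : ℂ, zn n + (ρn n : ℂ) * z ∈ ball (0 : ℂ) 1 →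
      sphv f (zn n + (ρn n : ℂ) * z) ≠ sphv ψ (zn n + (ρn n : ℂ) * z)) :
    ∀ z : ℂ, sphv g z ≠ Ψ z₀ :=
  limit_omits_boundary_value_general f ψ Ψ hf hψ hΨc hΨeq zn z₀ hz₀ hlim ρn hρ0 g hg hgnc hconv
    havoid

end
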